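/- Let E be a real inner product space and let p, q ∈ E be unit vectors with Ω = arccos⟨p,q⟩ ∈ (0,π). For every t ∈ [0,1], arccos⟨p, Slerp(p,q,t)⟩ + arccos⟨Slerp(p,q,t), q⟩ = Ω; i.e., the interpolant lies on the minimal geodesic from p to q, splitting the total geodesic distance additively. -/

import Mathlib

/-! On the great circle through `p` and `q`, `⟪p, slerp p q t⟫ = cos (t Ω)` and, by the symmetry
`slerp p q t = slerp q p (1 - t)`, `⟪slerp p q t, q⟫ = cos ((1 - t) Ω)`. Both angles `t Ω` and
`(1 - t) Ω` lie in `[0, π]`, where `arccos` inverts `cos`, so the two distances add up to `Ω`. -/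

open Real

open scoped RealInnerProductSpace

/-- Spherical linear interpolation between `p` and `q` at parameter `t`. -/
noncomputable def slerp {E : Type*} [NormedAddCommGroup E] [InnerProductSpace ℝ E]
    (p q : E) (t : ℝ) : E :=
  (Real.sin ((1 - t) * Real.arccos ⟪p, q⟫) / Real.sin (Real.arccos ⟪p, q⟫)) • p +
    (Real.sin (t * Real.arccos ⟪p, q⟫) / Real.sin (Real.arccos ⟪p, q⟫)) • q

section Slerp

variable {E : Type*} [NormedAddCommGroup E] [InnerProductSpace ℝ E]

theorem slerp_comm (p q : E) (t : ℝ) : slerp p q t = slerp q p (1 - t) := by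
  simp only [slerp, real_inner_comm p q, sub_sub_cancel]
  exact add_comm _ _

theorem inner_slerp_left {p q : E} (hp : ‖p‖ = 1) (hq : ‖q‖ = 1)
    (hΩ : sin (arccos ⟪p, q⟫) ≠ 0) (t : ℝ) :
    ⟪p, slerp p q t⟫ = cos (t * arccos ⟪p, q⟫) := by
  obtain ⟨hlo, hhi⟩ := real_inner_mem_Icc_of_norm_eq_one hp hq
  simp only [slerp, inner_add_right, real_inner_smul_right, inner_self_eq_one_of_norm_eq_one hp]
  rw [show (1 - t) * arccos ⟪p, q⟫ = arccos ⟪p, q⟫ - t * arccos ⟪p, q⟫ by ring, sin_sub,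
    cos_arccos hlo hhi]
  field_simp
  ring

theorem inner_slerp_right {p q : E} (hp : ‖p‖ = 1) (hq : ‖q‖ = 1)
    (hΩ : sin (arccos ⟪p, q⟫) ≠ 0) (t : ℝ) :
    ⟪slerp p q t, q⟫ = cos ((1 - t) * arccos ⟪p, q⟫) :=
  calc ⟪slerp p q t, q⟫ = ⟪q, slerp q p (1 - t)⟫ := by rw [slerp_comm, real_inner_comm]
    _ = cos ((1 - t) * arccos ⟪q, p⟫) := inner_slerp_left hq hp (by rwa [real_inner_comm]) _
    _ = cos ((1 - t) * arccos ⟪p, q⟫) := by rw [real_inner_comm]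

end Slerp

theorem arccos_cos_mul {t Ω : ℝ} (ht : t ∈ Set.Icc 0 1) (hΩ : Ω ∈ Set.Icc 0 π) :
    arccos (cos (t * Ω)) = t * Ω :=
  arccos_cos (mul_nonneg ht.1 hΩ.1) (by nlinarith [ht.1, ht.2, hΩ.1, hΩ.2])

/-- The SLERP interpolant lies on the minimal geodesic from `p` to `q`,
splitting the total geodesic distance additively. -/
theorem slerp_geodesic_additive
    {E : Type*} [NormedAddCommGroup E] [InnerProductSpace ℝ E]
    (p q : E) (hp : ‖p‖ = 1) (hq : ‖q‖ = 1)
    (hΩ : Real.arccos ⟪p, q⟫ ∈ Set.Ioo 0 Real.pi) :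
    ∀ t ∈ Set.Icc (0 : ℝ) 1,
      Real.arccos ⟪p, slerp p q t⟫ + Real.arccos ⟪slerp p q t, q⟫ =
        Real.arccos ⟪p, q⟫ := by
  intro t ht
  have hsin : sin (arccos ⟪p, q⟫) ≠ 0 := (sin_pos_of_pos_of_lt_pi hΩ.1 hΩ.2).ne'
  have ht' : 1 - t ∈ Set.Icc (0 : ℝ) 1 := ⟨by linarith [ht.2], by linarith [ht.1]⟩
  rw [inner_slerp_left hp hq hsin, inner_slerp_right hp hq hsin,
    arccos_cos_mul ht (Set.Ioo_subset_Icc_self hΩ), arccos_cos_mul ht' (Set.Ioo_subset_Icc_self hΩ)]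
  ring
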